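/- arXiv:1712.05581 — 5 statements merged into one kernel-verified Lean document; each statement's English description precedes it below -/
import Mathlib

section
/- (Theorem 1: correctness of the reduction of CD-NPI learning to ICE learning) Let 𝔖 = (W, S, I) be a CD-NPI sample over P, let S_𝔖 = (S₊, S₋, S_⇒) be its translated ICE sample, and let γ be a positive Boolean formula over P. Then γ is consistent with 𝔖 if and only if γ is consistent with S_𝔖. -/
lemma aux_weak {P : Type*} [DecidableEq P] (γ : (P → Bool) → Prop)
    (hmono : ∀ v v' : P → Bool, (∀ p, v p = true → v' p = true) → γ v → γ v')
    (J : Finset P) :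
    (¬ ∀ w : P → Bool, γ w → ∃ p ∈ J, w p = true) ↔ γ (fun p => !decide (p ∈ J)) := by
  constructor
  · intro h
    push_neg at h
    obtain ⟨w, hw, hno⟩ := h
    refine hmono w _ (fun p hp => ?_) hw
    simp only [Bool.not_eq_true']
    by_contra hc
    exact absurd hp (by simpa using hno p (by simpa using hc))
  · intro h hall
    obtain ⟨p, hp, hpt⟩ := hall _ h
    simp [hp] at hpt

lemma aux_str {P : Type*} [DecidableEq P] (γ : (P → Bool) → Prop)
    (hmono : ∀ v v' : P → Bool, (∀ p, v p = true → v' p = true) → γ v → γ v')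
    (J : Finset P) :
    (¬ ∀ w : P → Bool, (∀ p ∈ J, w p = true) → γ w) ↔ ¬ γ (fun p => decide (p ∈ J)) := by
  constructor
  · intro h hγ
    push_neg at h
    obtain ⟨w, hw, hno⟩ := h
    exact hno (hmono _ w (fun p hp => hw p (by simpa using hp)) hγ)
  · intro h hall
    exact h (hall _ (fun p hp => by simp [hp]))


/-- Theorem 1: correctness of the reduction of CD-NPI learning to ICE learning.
A CD-NPI sample `(W, S, I)` is represented by the finsets of variables of its
disjunctions (weakening constraints), conjunctions (strengthening constraints),
and pairs thereof (inductivity constraints). A positive Boolean formula `γ` is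
represented by its satisfaction predicate together with monotonicity.
The left-hand side is consistency with the CD-NPI sample, the right-hand side
is consistency with the translated ICE sample
`S₊ = {d(⋁J) | ⋁J ∈ W}`, `S₋ = {c(⋀J) | ⋀J ∈ S}`,
`S_⇒ = {(c(⋀J1), d(⋁J2)) | (⋀J1, ⋁J2) ∈ I}`. -/
theorem cdnpi_to_ice_correct {P : Type*} [Fintype P] [DecidableEq P]
    (γ : (P → Bool) → Prop)
    (hmono : ∀ v v' : P → Bool, (∀ p, v p = true → v' p = true) → γ v → γ v')
    (W S : Finset (Finset P)) (I : Finset (Finset P × Finset P)) :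
    ((∀ Jχ ∈ W, ¬ ∀ w : P → Bool, γ w → ∃ p ∈ Jχ, w p = true) ∧
     (∀ Jη ∈ S, ¬ ∀ w : P → Bool, (∀ p ∈ Jη, w p = true) → γ w) ∧
     (∀ pr ∈ I, (¬ ∀ w : P → Bool, (∀ p ∈ pr.1, w p = true) → γ w) ∨
                (¬ ∀ w : P → Bool, γ w → ∃ p ∈ pr.2, w p = true)))
    ↔
    ((∀ Jχ ∈ W, γ (fun p => !decide (p ∈ Jχ))) ∧
     (∀ Jη ∈ S, ¬ γ (fun p => decide (p ∈ Jη))) ∧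
     (∀ pr ∈ I, γ (fun p => decide (p ∈ pr.1)) →
                γ (fun p => !decide (p ∈ pr.2)))) := by
  refine and_congr (forall₂_congr fun J _ => aux_weak γ hmono J)
    (and_congr (forall₂_congr fun J _ => aux_str γ hmono J)
      (forall₂_congr fun pr _ => ?_))
  rw [aux_str γ hmono, aux_weak γ hmono]
  tauto
end

section
/- (Existence of a unique strongest conjunction consistent with positive and implication examples) Let P be finite, S₊ a finite set of valuations of P, and S_⇒ a finite set of pairs of valuations of P. Then there exists a subset J* ⊆ P such that ⋀J* is consistent with (S₊, S_⇒) and every J ⊆ P whose conjunction ⋀J is consistent with (S₊, S_⇒) satisfies J ⊆ J*. Consequently ⋀J* is the unique semantically strongest conjunction consistent with (S₊, S_⇒). -/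
/-- A conjunction `⋀J` (given by `J : Finset P`) is consistent with positive
examples `S₊` and implication examples `S_⇒` if every positive example
satisfies it and it respects every implication. -/
def ConsConj {P : Type*} (Splus : Finset (P → Bool))
    (Simp : Finset ((P → Bool) × (P → Bool))) (J : Finset P) : Prop :=
  (∀ v ∈ Splus, ∀ p ∈ J, v p = true) ∧
  (∀ pr ∈ Simp, (∀ p ∈ J, pr.1 p = true) → ∀ p ∈ J, pr.2 p = true)

/-- Existence of a unique strongest conjunction consistent with positive and
implication examples: there is a `J* ⊆ P` with `⋀J*` consistent with
`(S₊, S_⇒)` that contains every consistent conjunct set. -/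
theorem exists_largest_consConj {P : Type*} [Fintype P] [DecidableEq P]
    (Splus : Finset (P → Bool)) (Simp : Finset ((P → Bool) × (P → Bool))) :
    ∃ Jstar : Finset P, ConsConj Splus Simp Jstar ∧
      ∀ J : Finset P, ConsConj Splus Simp J → J ⊆ Jstar := by
  classical
  set F : Finset (Finset P) :=
    (Finset.univ : Finset (Finset P)).filter (fun J => ConsConj Splus Simp J) with hF
  refine ⟨F.sup id, ⟨?_, ?_⟩, ?_⟩
  · intro v hv p hp
    obtain ⟨J, hJ, hpJ⟩ := Finset.mem_sup.mp hp
    exact (Finset.mem_filter.mp hJ).2.1 v hv p hpJ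
  · intro pr hpr h1 p hp
    obtain ⟨J, hJ, hpJ⟩ := Finset.mem_sup.mp hp
    have hJcons := (Finset.mem_filter.mp hJ).2
    refine hJcons.2 pr hpr (fun q hq => h1 q ?_) p hpJ
    exact Finset.le_sup (f := id) hJ hq
  · intro J hJ
    have : J ∈ F := Finset.mem_filter.mpr ⟨Finset.mem_univ _, hJ⟩
    exact Finset.le_sup (f := id) this
end

section
/- (Correctness of Houdini's consistency check) Let P be finite, let (S₊, S₋, S_⇒) be an ICE sample over P, and let J* ⊆ P be the largest subset such that ⋀J* is consistent with (S₊, S_⇒). Then there exists a conjunction of variables of P consistent with the full ICE sample (S₊, S₋, S_⇒) if and only if v ⊭ ⋀J* for every v ∈ S₋. -/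
/-- Correctness of Houdini's consistency check: with `J*` the largest subset of
`P` such that `⋀J*` is consistent with `(S₊, S_⇒)`, there exists a conjunction
consistent with the full ICE sample `(S₊, S₋, S_⇒)` iff `v ⊭ ⋀J*` for every
negative example `v ∈ S₋`. -/
theorem houdini_consistency_check {P : Type*} [Fintype P] [DecidableEq P]
    (Splus Sminus : Finset (P → Bool))
    (Simp : Finset ((P → Bool) × (P → Bool)))
    (Jstar : Finset P)
    (hcons : ConsConj Splus Simp Jstar)
    (hlargest : ∀ J : Finset P, ConsConj Splus Simp J → J ⊆ Jstar) :
    (∃ J : Finset P, ConsConj Splus Simp J ∧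
        ∀ v ∈ Sminus, ¬ ∀ p ∈ J, v p = true) ↔
    (∀ v ∈ Sminus, ¬ ∀ p ∈ Jstar, v p = true) := by
  constructor
  · rintro ⟨J, hJ, hneg⟩ v hv hall
    exact hneg v hv fun p hp => hall p (hlargest J hJ hp)
  · intro h
    exact ⟨Jstar, hcons, h⟩
end

section
/- (Houdini round bound) Let P be a finite set with n variables. Suppose (S₊ᵏ, S_⇒ᵏ) for k = 0, 1, ..., N is an increasing sequence of samples (S₊ᵏ ⊆ S₊ᵏ⁺¹ and S_⇒ᵏ ⊆ S_⇒ᵏ⁺¹), let Jₖ ⊆ P be the largest subset such that ⋀Jₖ is consistent with (S₊ᵏ, S_⇒ᵏ), and suppose that for every k < N the conjunction ⋀Jₖ is not consistent with (S₊ᵏ⁺¹, S_⇒ᵏ⁺¹). Then N ≤ n; that is, the iterative conjunctive learner makes at most n + 1 conjectures. -/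
lemma consConj_anti {P : Type*} {S1 S2 : Finset (P → Bool)}
    {I1 I2 : Finset ((P → Bool) × (P → Bool))} {J : Finset P}
    (hS : S1 ⊆ S2) (hI : I1 ⊆ I2) (h : ConsConj S2 I2 J) :
    ConsConj S1 I1 J :=
  ⟨fun v hv => h.1 v (hS hv), fun pr hpr => h.2 pr (hI hpr)⟩

/-- Houdini round bound: for an increasing sequence of samples
`(S₊ᵏ, S_⇒ᵏ)`, `k = 0, …, N`, with `Jₖ` the largest conjunct set consistent
with `(S₊ᵏ, S_⇒ᵏ)`, if for every `k < N` the conjunction `⋀Jₖ` is not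
consistent with `(S₊ᵏ⁺¹, S_⇒ᵏ⁺¹)`, then `N ≤ n` where `n = |P|`; i.e. the
iterative conjunctive learner makes at most `n + 1` conjectures. -/
theorem houdini_round_bound {P : Type*} [Fintype P] [DecidableEq P]
    (N : ℕ)
    (Splus : ℕ → Finset (P → Bool))
    (Simp : ℕ → Finset ((P → Bool) × (P → Bool)))
    (hmonoP : ∀ k < N, Splus k ⊆ Splus (k + 1))
    (hmonoI : ∀ k < N, Simp k ⊆ Simp (k + 1))
    (J : ℕ → Finset P)
    (hcons : ∀ k ≤ N, ConsConj (Splus k) (Simp k) (J k))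
    (hlargest : ∀ k ≤ N, ∀ J' : Finset P,
        ConsConj (Splus k) (Simp k) J' → J' ⊆ J k)
    (hrefute : ∀ k < N, ¬ ConsConj (Splus (k + 1)) (Simp (k + 1)) (J k)) :
    N ≤ Fintype.card P := by
  have hstrict : ∀ k < N, J (k + 1) ⊂ J k := by
    intro k hk
    have hc1 : ConsConj (Splus (k + 1)) (Simp (k + 1)) (J (k + 1)) :=
      hcons (k + 1) hk
    have hsub : J (k + 1) ⊆ J k :=
      hlargest k hk.le _ (consConj_anti (hmonoP k hk) (hmonoI k hk) hc1)
    refine ⟨hsub, fun hsub' => ?_⟩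
    have heq : J (k + 1) = J k := Finset.Subset.antisymm hsub hsub'
    exact hrefute k hk (heq ▸ hc1)
  -- strict decrease in cardinality gives the bound
  have hcard : ∀ k, k ≤ N → k + (J k).card ≤ (J 0).card := by
    intro k hk
    induction k with
    | zero => simp
    | succ m ih =>
      have hm : m < N := hk
      have h1 := Finset.card_lt_card (hstrict m hm)
      have := ih hm.le
      omega
  have h0 : (J 0).card ≤ Fintype.card P := Finset.card_le_card (Finset.subset_univ _) |>.trans_eq (by simp)
  have := hcard N le_rfl
  omega
end

section
/- (Convergence, the combinatorial core of Theorem 2) Let H be a finite set of hypotheses, C a set of constraints, cons : H → C → Prop a consistency relation, and Good ⊆ H a nonempty set of adequate hypotheses. Let S : ℕ → Set C be a monotone sequence of samples (S(n) ⊆ S(n+1)) and γ : ℕ → H a sequence of conjectures such that: (i) γ(n) is consistent with S(n) for every n; (ii) whenever γ(n) ∉ Good, there exists a constraint c ∈ S(n+1) with ¬cons (γ(n)) c (the verification engine refutes every inadequate conjecture); and (iii) every g ∈ Good is consistent with S(n) for every n (honesty of the engine). Then there exists n < |H| such that γ(n) ∈ Good. -/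
/-- Convergence (the combinatorial core of Theorem 2): a consistent learner
paired with an honest verification engine that refutes every inadequate
conjecture produces an adequate hypothesis within `|H|` rounds. -/
theorem learner_convergence {H C : Type*} [Fintype H]
    (cons : H → C → Prop)
    (Good : Set H) (hGood : Good.Nonempty)
    (S : ℕ → Set C) (hS : ∀ n, S n ⊆ S (n + 1))
    (γ : ℕ → H)
    (hcons : ∀ n, ∀ c ∈ S n, cons (γ n) c)
    (hrefute : ∀ n, γ n ∉ Good → ∃ c ∈ S (n + 1), ¬ cons (γ n) c)
    (hhonest : ∀ g ∈ Good, ∀ n, ∀ c ∈ S n, cons g c) :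
    ∃ n < Fintype.card H, γ n ∈ Good := by
  by_contra h
  push_neg at h
  set N := Fintype.card H
  have hmono : ∀ m n, m ≤ n → S m ⊆ S n := by
    intro m n hmn
    induction n with
    | zero => simp_all
    | succ k ih =>
      rcases Nat.lt_or_ge m (k+1) with hlt | hge
      · exact (ih (Nat.lt_succ_iff.mp hlt)).trans (hS k)
      · have : m = k+1 := le_antisymm hmn hge
        subst this; exact subset_rfl
  have hinj : Function.Injective (fun i : Fin (N+1) => γ i) := by
    have key : ∀ a b : Fin (N+1), (a : ℕ) < b → γ (a : ℕ) ≠ γ (b : ℕ) := by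
      intro a b hlt hab
      have hbad : γ (a : ℕ) ∉ Good := h a (by omega)
      obtain ⟨c, hc, hnc⟩ := hrefute a hbad
      have hcb : c ∈ S (b : ℕ) := hmono (a+1) b hlt hc
      have : cons (γ (b : ℕ)) c := hcons b c hcb
      rw [← hab] at this
      exact hnc this
    intro a b hab
    simp only at hab
    rcases lt_trichotomy (a : ℕ) (b : ℕ) with hlt | heq | hgt
    · exact absurd hab (key a b hlt)
    · exact Fin.ext heq
    · exact absurd hab.symm (key b a hgt)
  have := Fintype.card_le_of_injective _ hinj
  simp [N] at this
end
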